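/- arXiv:1312.7227 — 2 statements merged into one kernel-verified Lean document; each statement's English description precedes it below -/
import Mathlib

section
/- Let k be a field of characteristic zero, let Γ be a finite group acting linearly on a k-vector space H, let V be a k-vector space, and let k ≥ 1 and Λ : H × ⋯ × H → V (k factors) be a k-multilinear map that is Γ-invariant, i.e. Λ(σ·a₁, …, σ·a_k) = Λ(a₁, …, a_k) for all σ ∈ Γ and a₁, …, a_k ∈ H. Let H' ⊆ H be a Γ-invariant subspace with H' ∩ H^Γ = {0}. Then for any a₁, …, a_{k−1} ∈ H^Γ and any w ∈ H', one has Λ(a₁, …, a_{k−1}, w) = 0. -/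
/-!
Fixing the invariant arguments turns `Λ` into a `Γ`-invariant linear map `L` on `H`, and
invariance gives `L = L ∘ averageMap`, where the Reynolds operator `averageMap` exists because
`|Γ|` is invertible in characteristic zero. Averaging maps `H'` into `H' ∩ H^Γ = 0`, so `L`
vanishes on `H'`.
-/

namespace Representation

variable {k G V : Type*} [CommRing k] [Group G] [Fintype G] [Invertible (Fintype.card G : k)]
  [AddCommGroup V] [Module k V] (ρ : Representation k G V)

theorem averageMap_apply (v : V) :
    ρ.averageMap v = ⅟(Fintype.card G : k) • ∑ g : G, ρ g v := by
  simp [averageMap, GroupAlgebra.average, map_sum]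

theorem averageMap_mem {W : Submodule k V} (hW : ∀ g, ∀ w ∈ W, ρ g w ∈ W) {w : V} (hw : w ∈ W) :
    ρ.averageMap w ∈ W := by
  rw [averageMap_apply]
  exact W.smul_mem _ (W.sum_mem fun g _ => hW g w hw)

theorem comp_averageMap_of_forall_comp_eq {U : Type*} [AddCommMonoid U] [Module k U]
    {L : V →ₗ[k] U} (hL : ∀ g, L ∘ₗ ρ g = L) : L ∘ₗ ρ.averageMap = L := by
  ext v
  have hLg : ∀ g, L (ρ g v) = L v := fun g => LinearMap.congr_fun (hL g) v
  rw [LinearMap.comp_apply, averageMap_apply]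
  simp [map_sum, hLg, Finset.card_univ, ← Nat.cast_smul_eq_nsmul k, smul_smul]

theorem apply_eq_zero_of_disjoint_invariants {U : Type*} [AddCommMonoid U] [Module k U]
    {L : V →ₗ[k] U} (hL : ∀ g, L ∘ₗ ρ g = L) {W : Submodule k V}
    (hW : ∀ g, ∀ w ∈ W, ρ g w ∈ W) (hdisj : Disjoint W ρ.invariants) {w : V} (hw : w ∈ W) :
    L w = 0 := by
  have hzero : ρ.averageMap w = 0 :=
    Submodule.disjoint_def.1 hdisj _ (ρ.averageMap_mem hW hw) (ρ.averageMap_invariant w)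
  rw [← comp_averageMap_of_forall_comp_eq ρ hL, LinearMap.comp_apply, hzero, map_zero]

end Representation

namespace MultilinearMap

variable {k G H V ι : Type*} [CommSemiring k] [Monoid G] [DecidableEq ι]
  [AddCommMonoid H] [Module k H] [AddCommMonoid V] [Module k V]

theorem toLinearMap_comp_eq_of_invariant (ρ : Representation k G H)
    (Λ : MultilinearMap k (fun _ : ι => H) V)
    (hΛ : ∀ (g : G) (a : ι → H), Λ (fun i => ρ g (a i)) = Λ a)
    {a : ι → H} {i : ι} (ha : ∀ j ≠ i, ∀ g, ρ g (a j) = a j) (g : G) :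
    Λ.toLinearMap a i ∘ₗ ρ g = Λ.toLinearMap a i := by
  ext x
  have hupdate : Function.update a i (ρ g x) = fun j => ρ g (Function.update a i x j) := by
    ext j
    rcases eq_or_ne j i with rfl | hj
    · simp
    · simp [hj, ha j hj]
  simp [hupdate, hΛ]

end MultilinearMap

/-- If `Γ` is a finite group acting linearly on a vector space `H` over a field of
characteristic zero, `Λ` is a `Γ`-invariant multilinear map in `m + 1 ≥ 1` arguments
with values in a vector space `V`, and `H'` is a `Γ`-invariant subspace with
`H' ∩ H^Γ = {0}`, then `Λ` vanishes whenever its first `m` arguments are `Γ`-invariant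
vectors and its last argument lies in `H'`. -/
theorem multilinear_vanishes_on_invariants_and_complement
    {k H V : Type*} [Field k] [CharZero k]
    [AddCommGroup H] [Module k H] [AddCommGroup V] [Module k V]
    {Γ : Type*} [Group Γ] [Fintype Γ]
    (ρ : Representation k Γ H)
    (m : ℕ)
    (Λ : MultilinearMap k (fun _ : Fin (m + 1) => H) V)
    (hΛinv : ∀ (σ : Γ) (a : Fin (m + 1) → H), Λ (fun i => ρ σ (a i)) = Λ a)
    (H' : Submodule k H)
    (hH'inv : ∀ σ : Γ, ∀ w ∈ H', ρ σ w ∈ H')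
    (hdisj : ∀ v ∈ H', (∀ σ : Γ, ρ σ v = v) → v = 0)
    (a : Fin m → H) (ha : ∀ (i : Fin m) (σ : Γ), ρ σ (a i) = a i)
    (w : H) (hw : w ∈ H') :
    Λ (Fin.snoc a w) = 0 := by
  have : Invertible (Fintype.card Γ : k) :=
    invertibleOfNonzero (Nat.cast_ne_zero.2 Fintype.card_ne_zero)
  set x : Fin (m + 1) → H := Fin.snoc a w
  have hfixed : ∀ j ≠ Fin.last m, ∀ σ, ρ σ (x j) = x j := by
    intro j hj σ
    obtain ⟨j, rfl⟩ := Fin.exists_castSucc_eq.2 hj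
    simpa [x] using ha j σ
  have hL := Λ.toLinearMap_comp_eq_of_invariant ρ hΛinv hfixed
  simpa [x, Fin.update_snoc_last] using
    ρ.apply_eq_zero_of_disjoint_invariants hL hH'inv (Submodule.disjoint_def.2 hdisj) hw
end

section
/- Let P ∈ ℂ[X] be a polynomial, t ∈ ℂ, f(x, y) = P(x) + x y² + t y, and λ(z) = P(z²) − t²/(4z²) for z ≠ 0. Let z ∈ ℂ with z ≠ 0 satisfy P′(z²) + t²/(4z⁴) = 0, so that (x, y) = (z², −t/(2z²)) is a critical point of f. Then the Hessian determinant of f at this point, H = (∂²f/∂x²)(∂²f/∂y²) − (∂²f/∂x∂y)², equals 2 z² P″(z²) − t²/z⁴, and the second derivative of λ at z satisfies λ″(z) = 2H, i.e. λ″(z) = 2·(2 z² P″(z²) − t²/z⁴). -/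
/-!
Differentiating `λ(w) = P(w²) − t²/(4w²)` twice gives
`λ″(z) = 2P′(z²) + 4z²P″(z²) − 3t²/(2z⁴)`. At a critical point `P′(z²) = −t²/(4z⁴)`,
so the first term turns into `−t²/(2z⁴)` and `λ″(z) = 4z²P″(z²) − 2t²/z⁴`, which is
twice the Hessian determinant `P″(z²)·2z² − (−t/z²)²`.
-/

open Polynomial Topology

namespace Polynomial

variable {𝕜 : Type*} [NontriviallyNormedField 𝕜]

theorem hasDerivAt_eval_sq (P : 𝕜[X]) (w : 𝕜) :
    HasDerivAt (fun w => P.eval (w ^ 2)) (2 * w * P.derivative.eval (w ^ 2)) w := by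
  refine ((P.hasDerivAt (w ^ 2)).comp w (hasDerivAt_pow 2 w)).congr_deriv ?_
  push_cast
  ring

/-- The superpotential of the D-type singularity `P(x) + x y² + t y`. -/
noncomputable def superpotential (P : 𝕜[X]) (t w : 𝕜) : 𝕜 :=
  P.eval (w ^ 2) - t ^ 2 / (4 * w ^ 2)

variable [CharZero 𝕜] (P : 𝕜[X]) (t : 𝕜) {w : 𝕜}

theorem hasDerivAt_superpotential (hw : w ≠ 0) :
    HasDerivAt (superpotential P t)
      (2 * w * P.derivative.eval (w ^ 2) + t ^ 2 / (2 * w ^ 3)) w := by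
  have hden : HasDerivAt (fun w : 𝕜 => 4 * w ^ 2) (4 * (2 * w)) w := by
    simpa using (hasDerivAt_pow 2 w).const_mul (4 : 𝕜)
  refine ((P.hasDerivAt_eval_sq w).sub
    ((hasDerivAt_const w (t ^ 2)).div hden (by simp [hw]))).congr_deriv ?_
  field_simp
  ring

theorem deriv_superpotential_eventuallyEq (hw : w ≠ 0) :
    deriv (superpotential P t) =ᶠ[𝓝 w]
      fun w => 2 * w * P.derivative.eval (w ^ 2) + t ^ 2 / (2 * w ^ 3) := by
  filter_upwards [eventually_ne_nhds hw] with v hv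
  exact (hasDerivAt_superpotential P t hv).deriv

theorem hasDerivAt_deriv_superpotential (hw : w ≠ 0) :
    HasDerivAt (deriv (superpotential P t))
      (2 * P.derivative.eval (w ^ 2) + 4 * w ^ 2 * P.derivative.derivative.eval (w ^ 2)
        - 3 * t ^ 2 / (2 * w ^ 4)) w := by
  have hlin : HasDerivAt (fun w : 𝕜 => 2 * w) 2 w := by
    simpa using (hasDerivAt_id w).const_mul (2 : 𝕜)
  have hden : HasDerivAt (fun w : 𝕜 => 2 * w ^ 3) (2 * (3 * w ^ 2)) w := by
    simpa using (hasDerivAt_pow 3 w).const_mul (2 : 𝕜)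
  refine HasDerivAt.congr_of_eventuallyEq ?_ (deriv_superpotential_eventuallyEq P t hw)
  refine ((hlin.mul (P.derivative.hasDerivAt_eval_sq w)).add
    ((hasDerivAt_const w (t ^ 2)).div hden (by simp [hw]))).congr_deriv ?_
  field_simp
  ring

theorem deriv_deriv_superpotential (hw : w ≠ 0) :
    deriv (deriv (superpotential P t)) w =
      2 * P.derivative.eval (w ^ 2) + 4 * w ^ 2 * P.derivative.derivative.eval (w ^ 2)
        - 3 * t ^ 2 / (2 * w ^ 4) :=
  (hasDerivAt_deriv_superpotential P t hw).deriv

end Polynomial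

/-- At a critical point `(z², −t/(2z²))` (with `z ≠ 0`) of
`f(x,y) = P(x) + x y² + t y`, the Hessian determinant
`(∂²f/∂x²)(∂²f/∂y²) − (∂²f/∂x∂y)²` (where `∂²f/∂x² = P″(x)`, `∂²f/∂y² = 2x`,
`∂²f/∂x∂y = 2y`) equals `2z²P″(z²) − t²/z⁴`, and the second derivative of the
superpotential `λ(z) = P(z²) − t²/(4z²)` satisfies
`λ″(z) = 2 (2z²P″(z²) − t²/z⁴) = 2H`. -/
theorem hessian_equals_half_second_derivative
    (P : Polynomial ℂ) (t : ℂ) (z : ℂ) (hz : z ≠ 0)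
    (hcrit : P.derivative.eval (z ^ 2) + t ^ 2 / (4 * z ^ 4) = 0) :
    P.derivative.derivative.eval (z ^ 2) * (2 * z ^ 2)
        - (2 * (-t / (2 * z ^ 2))) ^ 2
      = 2 * z ^ 2 * P.derivative.derivative.eval (z ^ 2) - t ^ 2 / z ^ 4 ∧
    deriv (deriv (fun w : ℂ => P.eval (w ^ 2) - t ^ 2 / (4 * w ^ 2))) z
      = 2 * (2 * z ^ 2 * P.derivative.derivative.eval (z ^ 2) - t ^ 2 / z ^ 4) := by
  refine ⟨by ring, ?_⟩
  change deriv (deriv (superpotential P t)) z = _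
  rw [deriv_deriv_superpotential P t hz]
  linear_combination 2 * hcrit
end
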